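/- arXiv:0704.2183 — 5 statements merged into one kernel-verified Lean document; each statement's English description precedes it below -/
import Mathlib

section
/- Let p ≥ 1 and N = 2^p. For the cellular automaton on the cyclic lattice ℤ/Nℤ in which every cell uses the rule φ6(x,y) = x XOR y, for every initial configuration x(0) : ℤ/Nℤ → {0,1}, the state satisfies x_i(t) = 0 for every cell i and every time t ≥ N. In particular every cell stabilizes. -/
/-- A Boolean rule: a function `{0,1} × {0,1} → {0,1}`. -/
abbrev Rule : Type := Bool → Bool → Bool

/-- The rule `φ6(x,y) = x + y mod 2`, i.e. XOR. -/
def phi6 : Rule := fun x y => xor x y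

/-- Evolution of an inhomogeneous cellular automaton on the circle ℤ/Nℤ:
`x_i(t+1) = φ_i(x_{i-1}(t), x_{i+1}(t))`, indices mod `N`. -/
def evolveC (N : ℕ) (φ : ZMod N → Rule) (x0 : ZMod N → Bool) : ℕ → ZMod N → Bool
  | 0 => x0
  | t+1 => fun i => φ i (evolveC N φ x0 t (i-1)) (evolveC N φ x0 t (i+1))

/-- A trajectory `t ↦ x(t)` stabilizes if it is eventually constant. -/
def Stabilizes (x : ℕ → Bool) : Prop := ∃ T, ∀ t, T ≤ t → x t = x T

lemma doubling (N : ℕ) (x0 : ZMod N → Bool) (k : ℕ) :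
    ∀ (t : ℕ) (i : ZMod N),
      evolveC N (fun _ => phi6) x0 (t + 2 ^ k) i =
        xor (evolveC N (fun _ => phi6) x0 t (i - (2 ^ k : ℕ)))
            (evolveC N (fun _ => phi6) x0 t (i + (2 ^ k : ℕ))) := by
  induction k with
  | zero =>
    intro t i
    simp [evolveC, phi6]
  | succ k ih =>
    intro t i
    have h2 : t + 2 ^ (k + 1) = (t + 2 ^ k) + 2 ^ k := by ring
    rw [h2, ih, ih, ih]
    have e1 : i - (2 ^ k : ℕ) - (2 ^ k : ℕ) = i - ((2 ^ (k+1) : ℕ) : ZMod N) := by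
      push_cast; ring
    have e2 : i - (2 ^ k : ℕ) + (2 ^ k : ℕ) = i := by ring
    have e3 : i + (2 ^ k : ℕ) - (2 ^ k : ℕ) = i := by ring
    have e4 : i + (2 ^ k : ℕ) + (2 ^ k : ℕ) = i + ((2 ^ (k+1) : ℕ) : ZMod N) := by
      push_cast; ring
    rw [e1, e2, e3, e4]
    cases evolveC N (fun _ => phi6) x0 t i <;> simp

lemma zeroAtN (p : ℕ) (N : ℕ) (hN : N = 2 ^ p) (x0 : ZMod N → Bool) :
    ∀ (t : ℕ) (i : ZMod N), evolveC N (fun _ => phi6) x0 (t + N) i = false := by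
  intro t i
  have ht : t + N = t + 2 ^ p := by rw [hN]
  rw [ht, doubling N x0 p t i]
  have hc : ((2 ^ p : ℕ) : ZMod N) = 0 := by rw [← hN]; exact ZMod.natCast_self N
  rw [hc]
  simp

/-- for `N = 2^p` (`p ≥ 1`), the φ6-CA on ℤ/Nℤ satisfies `x_i(t) = 0`
for all cells `i` and all times `t ≥ N`; in particular every cell stabilizes. -/
theorem stmt1 (p : ℕ) (hp : 1 ≤ p) (N : ℕ) (hN : N = 2 ^ p)
    (x0 : ZMod N → Bool) :
    (∀ (i : ZMod N) (t : ℕ), N ≤ t → evolveC N (fun _ => phi6) x0 t i = false) ∧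
    (∀ i : ZMod N, Stabilizes (fun t => evolveC N (fun _ => phi6) x0 t i)) := by
  have key : ∀ (i : ZMod N) (t : ℕ), N ≤ t → evolveC N (fun _ => phi6) x0 t i = false := by
    intro i t ht
    have : t = (t - N) + N := by omega
    rw [this]
    exact zeroAtN p N hN x0 (t - N) i
  refine ⟨key, fun i => ⟨N, fun t ht => ?_⟩⟩
  simp only [key i t ht, key i N le_rfl]
end

section
/- Let p ≥ 1 and N = 2^p + 1. For the cellular automaton on the cyclic lattice ℤ/Nℤ in which every cell uses the rule φ6(x,y) = x XOR y, for every initial configuration x(0) : ℤ/Nℤ → {0,1} and every cell i, the state at time 2^p satisfies x_i(2^p) = x_{i−1}(0) XOR x_{i+1}(0). -/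
lemma evolveC_add (N : ℕ) (φ : ZMod N → Rule) (x0 : ZMod N → Bool) (s t : ℕ) :
    evolveC N φ x0 (s + t) = evolveC N φ (evolveC N φ x0 t) s := by
  induction s with
  | zero => simp [evolveC]
  | succ s ih => rw [Nat.succ_add]; funext i; simp [evolveC, ih]

lemma evolveC_pow (N : ℕ) (x0 : ZMod N → Bool) (k : ℕ) (i : ZMod N) :
    evolveC N (fun _ => phi6) x0 (2 ^ k) i
      = xor (x0 (i - (2 ^ k : ℕ))) (x0 (i + (2 ^ k : ℕ))) := by
  induction k generalizing x0 i with
  | zero => simp [evolveC, phi6]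
  | succ k ih =>
    have h2 : (2 : ℕ) ^ (k + 1) = 2 ^ k + 2 ^ k := by ring
    rw [h2, evolveC_add]
    rw [ih]
    rw [ih, ih]
    have e1 : i - (2 ^ k : ℕ) - (2 ^ k : ℕ) = i - ((2 ^ k + 2 ^ k : ℕ) : ZMod N) := by
      push_cast; ring
    have e2 : i - (2 ^ k : ℕ) + (2 ^ k : ℕ) = i := by ring
    have e3 : i + (2 ^ k : ℕ) - (2 ^ k : ℕ) = i := by ring
    have e4 : i + (2 ^ k : ℕ) + (2 ^ k : ℕ) = i + ((2 ^ k + 2 ^ k : ℕ) : ZMod N) := by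
      push_cast; ring
    rw [e1, e2, e3, e4]
    cases x0 (i - ((2 ^ k + 2 ^ k : ℕ) : ZMod N)) <;>
      cases x0 i <;> cases x0 (i + ((2 ^ k + 2 ^ k : ℕ) : ZMod N)) <;> rfl

/-- for `N = 2^p + 1` (`p ≥ 1`), the φ6-CA on ℤ/Nℤ satisfies
`x_i(2^p) = x_{i-1}(0) XOR x_{i+1}(0)` for every cell `i`. -/
theorem stmt2 (p : ℕ) (hp : 1 ≤ p) (N : ℕ) (hN : N = 2 ^ p + 1)
    (x0 : ZMod N → Bool) (i : ZMod N) :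
    evolveC N (fun _ => phi6) x0 (2 ^ p) i = xor (x0 (i - 1)) (x0 (i + 1)) := by
  have key : ((2 ^ p : ℕ) : ZMod N) = -1 := by
    have this : ((2 ^ p + 1 : ℕ) : ZMod N) = 0 := by
      rw [← hN]; exact ZMod.natCast_self N
    push_cast at this ⊢
    exact eq_neg_of_add_eq_zero_left this
  rw [evolveC_pow, key]
  rw [sub_neg_eq_add, ← sub_eq_add_neg]
  exact Bool.xor_comm _ _
end

section
/- The rule block (φ2, φ9, φ9, φ2) with value block b = (0,0,1,0) is an impermeable block of stable cells: for every pair of boundary sequences u, v : ℕ → {0,1}, the block evolution satisfies (y_1(t), y_2(t), y_3(t), y_4(t)) = (0,0,1,0) for every t ≥ 0. -/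
/-- Block evolution: cells `1,…,p` carry rules `ψ 1, …, ψ p` and initial values
`b 1, …, b p`; positions `0` and `p+1` are boundary cells whose value at time `t`
is `u t`, resp. `v t`; interior cells evolve by `y_j(t+1) = ψ_j(y_{j-1}(t), y_{j+1}(t))`. -/
def blockEvolve (p : ℕ) (ψ : ℕ → Rule) (b u v : ℕ → Bool) : ℕ → ℕ → Bool
  | 0, j => if j = 0 then u 0 else if j = p + 1 then v 0 else b j
  | t+1, j =>
      if j = 0 then u (t+1) else if j = p + 1 then v (t+1)
      else ψ j (blockEvolve p ψ b u v t (j-1)) (blockEvolve p ψ b u v t (j+1))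

/-- The rule `φ2`: `φ2(x,y) = 1` iff `(x,y) = (0,1)`. -/
def phi2 : Rule := fun x y => !x && y
/-- The rule `φ9(x,y) = x + y + 1 mod 2`. -/
def phi9 : Rule := fun x y => !(xor x y)

/-- the rule block `(φ2, φ9, φ9, φ2)` with value block `b = (0,0,1,0)`
is an impermeable block of stable cells: for all boundary sequences `u, v` and all `t`,
`(y_1(t), y_2(t), y_3(t), y_4(t)) = (0,0,1,0)`. -/
theorem stmt12 (u v : ℕ → Bool) (t : ℕ) :
    blockEvolve 4 (fun j => if j = 1 then phi2 else if j = 2 then phi9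
        else if j = 3 then phi9 else phi2)
      (fun j => decide (j = 3)) u v t 1 = false ∧
    blockEvolve 4 (fun j => if j = 1 then phi2 else if j = 2 then phi9
        else if j = 3 then phi9 else phi2)
      (fun j => decide (j = 3)) u v t 2 = false ∧
    blockEvolve 4 (fun j => if j = 1 then phi2 else if j = 2 then phi9
        else if j = 3 then phi9 else phi2)
      (fun j => decide (j = 3)) u v t 3 = true ∧
    blockEvolve 4 (fun j => if j = 1 then phi2 else if j = 2 then phi9
        else if j = 3 then phi9 else phi2)
      (fun j => decide (j = 3)) u v t 4 = false := by
  induction t with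
  | zero => simp [blockEvolve]
  | succ t ih =>
    obtain ⟨h1, h2, h3, h4⟩ := ih
    refine ⟨?_, ?_, ?_, ?_⟩ <;>
      simp [blockEvolve, h1, h2, h3, h4, phi2, phi9]
end

section
/- The rule block (φ2, φ2, φ11, φ2) with value block b = (0,1,1,0) is an absorbing block with central cell 3 of period 4: for every pair of boundary sequences u, v : ℕ → {0,1} and every k ≥ 0, the block evolution satisfies (y_1(4k), y_2(4k), y_3(4k), y_4(4k)) = (0,1,1,0) and y_3(4k+1) = 0. In particular cell 3 takes the values 1 and 0 infinitely often regardless of the boundary, so it never stabilizes. -/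
/-- The rule `φ11`: `φ11(x,y) = 0` iff `(x,y) = (1,0)`. -/
def phi11 : Rule := fun x y => !(x && !y)

section aux
variable (u v : ℕ → Bool)

private def E (u v : ℕ → Bool) : ℕ → ℕ → Bool :=
  blockEvolve 4 (fun j => if j = 3 then phi11 else phi2)
    (fun j => decide (j = 2) || decide (j = 3)) u v

private lemma E5 (t : ℕ) : E u v t 5 = v t := by
  cases t <;> simp [E, blockEvolve]

private lemma Estep (t : ℕ) (j : ℕ) (h1 : j ≠ 0) (h2 : j ≠ 5) :
    E u v (t+1) j = (if j = 3 then phi11 else phi2) (E u v t (j-1)) (E u v t (j+1)) := by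
  simp [E, blockEvolve, h1, h2]

private lemma key (t : ℕ)
    (h1 : E u v t 1 = false) (h2 : E u v t 2 = true)
    (h3 : E u v t 3 = true) (h4 : E u v t 4 = false) :
    E u v (t+1) 3 = false ∧
    E u v (t+4) 1 = false ∧ E u v (t+4) 2 = true ∧
    E u v (t+4) 3 = true ∧ E u v (t+4) 4 = false := by
  have a2 : E u v (t+1) 2 = true := by
    rw [Estep] <;> simp [phi2, h1, h3]
  have a3 : E u v (t+1) 3 = false := by
    rw [Estep] <;> simp [phi11, h2, h4]
  have a4 : E u v (t+1) 4 = false := by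
    rw [Estep] <;> simp [phi2, h3]
  have b2 : E u v (t+2) 2 = false := by
    rw [show t+2 = t+1+1 from rfl, Estep] <;> simp [phi2, a3]
  have b3 : E u v (t+2) 3 = false := by
    rw [show t+2 = t+1+1 from rfl, Estep] <;> simp [phi11, a2, a4]
  have c1 : E u v (t+3) 1 = false := by
    rw [show t+3 = t+2+1 from rfl, Estep] <;> simp [phi2, b2]
  have c2 : E u v (t+3) 2 = false := by
    rw [show t+3 = t+2+1 from rfl, Estep] <;> simp [phi2, b3]
  have c3 : E u v (t+3) 3 = true := by
    rw [show t+3 = t+2+1 from rfl, Estep] <;> simp [phi11, b2]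
  have d1 : E u v (t+4) 1 = false := by
    rw [show t+4 = t+3+1 from rfl, Estep] <;> simp [phi2, c2]
  have d2 : E u v (t+4) 2 = true := by
    rw [show t+4 = t+3+1 from rfl, Estep] <;> simp [phi2, c1, c3]
  have d3 : E u v (t+4) 3 = true := by
    rw [show t+4 = t+3+1 from rfl, Estep] <;> simp [phi11, c2]
  have d4 : E u v (t+4) 4 = false := by
    rw [show t+4 = t+3+1 from rfl, Estep] <;> simp [phi2, c3]
  exact ⟨a3, d1, d2, d3, d4⟩

private lemma main (k : ℕ) :
    E u v (4*k) 1 = false ∧ E u v (4*k) 2 = true ∧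
    E u v (4*k) 3 = true ∧ E u v (4*k) 4 = false ∧
    E u v (4*k+1) 3 = false := by
  induction k with
  | zero =>
    refine ⟨?_, ?_, ?_, ?_, ?_⟩
    · simp [E, blockEvolve]
    · simp [E, blockEvolve]
    · simp [E, blockEvolve]
    · simp [E, blockEvolve]
    · have := key u v 0 (by simp [E, blockEvolve]) (by simp [E, blockEvolve])
        (by simp [E, blockEvolve]) (by simp [E, blockEvolve])
      simpa using this.1
  | succ n ih =>
    obtain ⟨h1, h2, h3, h4, _⟩ := ih
    obtain ⟨_, g1, g2, g3, g4⟩ := key u v (4*n) h1 h2 h3 h4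
    have e : 4*(n+1) = 4*n+4 := by ring
    refine ⟨by rw [e]; exact g1, by rw [e]; exact g2, by rw [e]; exact g3,
      by rw [e]; exact g4, ?_⟩
    have := key u v (4*(n+1)) (by rw [e]; exact g1) (by rw [e]; exact g2)
      (by rw [e]; exact g3) (by rw [e]; exact g4)
    exact this.1

end aux

/-- the rule block `(φ2, φ2, φ11, φ2)` with value block `b = (0,1,1,0)`
is an absorbing block with central cell 3 of period 4: for all boundary sequences
`u, v` and all `k ≥ 0`, `(y_1(4k), y_2(4k), y_3(4k), y_4(4k)) = (0,1,1,0)` and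
`y_3(4k+1) = 0`; in particular cell 3 never stabilizes. -/
theorem stmt14 (u v : ℕ → Bool) :
    (∀ k : ℕ,
      blockEvolve 4 (fun j => if j = 3 then phi11 else phi2)
        (fun j => decide (j = 2) || decide (j = 3)) u v (4 * k) 1 = false ∧
      blockEvolve 4 (fun j => if j = 3 then phi11 else phi2)
        (fun j => decide (j = 2) || decide (j = 3)) u v (4 * k) 2 = true ∧
      blockEvolve 4 (fun j => if j = 3 then phi11 else phi2)
        (fun j => decide (j = 2) || decide (j = 3)) u v (4 * k) 3 = true ∧
      blockEvolve 4 (fun j => if j = 3 then phi11 else phi2)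
        (fun j => decide (j = 2) || decide (j = 3)) u v (4 * k) 4 = false ∧
      blockEvolve 4 (fun j => if j = 3 then phi11 else phi2)
        (fun j => decide (j = 2) || decide (j = 3)) u v (4 * k + 1) 3 = false) ∧
    ¬ Stabilizes (fun t =>
      blockEvolve 4 (fun j => if j = 3 then phi11 else phi2)
        (fun j => decide (j = 2) || decide (j = 3)) u v t 3) := by
  refine ⟨main u v, ?_⟩
  rintro ⟨T, hT⟩
  obtain ⟨_, _, h3, _, h3'⟩ := main u v T
  have hTle : T ≤ 4*T := by omega
  have e1 := hT (4*T) hTle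
  have e2 := hT (4*T+1) (by omega)
  simp only at e1 e2
  rw [show (blockEvolve 4 (fun j => if j = 3 then phi11 else phi2)
        (fun j => decide (j = 2) || decide (j = 3)) u v (4*T) 3 = E u v (4*T) 3) from rfl, h3] at e1
  rw [show (blockEvolve 4 (fun j => if j = 3 then phi11 else phi2)
        (fun j => decide (j = 2) || decide (j = 3)) u v (4*T+1) 3 = E u v (4*T+1) 3) from rfl, h3'] at e2
  rw [← e1] at e2
  exact Bool.false_ne_true e2
end

section
/- The rule block (φ2, φ2, φ3, φ2, φ3, φ2, φ2, φ2, φ3) with value block b = (0,0,1,1,0,0,0,0,1) is an absorbing block with a stable central cell: for every pair of boundary sequences u, v : ℕ → {0,1} and every t ≥ 0, the block evolution satisfies y_6(t) = 0. -/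
/-- The rule `φ3(x,y) = 1 - x`. -/
def phi3 : Rule := fun x _ => !x

/-- Periodic table of values of cells 2–9 as a function of `t % 4`. -/
def tab (r j : ℕ) : Bool :=
  if r = 0 then decide (j = 3 ∨ j = 4 ∨ j = 9)
  else if r = 1 then decide (j = 2 ∨ j = 3 ∨ j = 8 ∨ j = 9)
  else if r = 2 then decide (j = 2 ∨ j = 5 ∨ j = 7 ∨ j = 8)
  else decide (j = 4 ∨ j = 5 ∨ j = 7)

theorem stmt15_key (u v : ℕ → Bool) (t : ℕ) :
    ((t % 4 = 0 ∨ t % 4 = 1) →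
      blockEvolve 9 (fun j => if j = 3 ∨ j = 5 ∨ j = 9 then phi3 else phi2)
        (fun j => decide (j = 3) || decide (j = 4) || decide (j = 9)) u v t 1 = false) ∧
    (∀ j, 2 ≤ j → j ≤ 9 →
      blockEvolve 9 (fun j => if j = 3 ∨ j = 5 ∨ j = 9 then phi3 else phi2)
        (fun j => decide (j = 3) || decide (j = 4) || decide (j = 9)) u v t j
        = tab (t % 4) j) := by
  set E := blockEvolve 9 (fun j => if j = 3 ∨ j = 5 ∨ j = 9 then phi3 else phi2)
        (fun j => decide (j = 3) || decide (j = 4) || decide (j = 9)) u v with hE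
  induction t with
  | zero =>
    constructor
    · intro _; simp [hE, blockEvolve]
    · intro j h2 h9
      interval_cases j <;> simp [hE, blockEvolve, tab]
  | succ t ih =>
    obtain ⟨ih1, ih2⟩ := ih
    have e2 := ih2 2 (by norm_num) (by norm_num)
    have e3 := ih2 3 (by norm_num) (by norm_num)
    have e4 := ih2 4 (by norm_num) (by norm_num)
    have e5 := ih2 5 (by norm_num) (by norm_num)
    have e6 := ih2 6 (by norm_num) (by norm_num)
    have e7 := ih2 7 (by norm_num) (by norm_num)
    have e8 := ih2 8 (by norm_num) (by norm_num)
    have e9 := ih2 9 (by norm_num) (by norm_num)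
    have step : ∀ j : ℕ, j ≠ 0 → j ≠ 10 →
        E (t+1) j = (if j = 3 ∨ j = 5 ∨ j = 9 then phi3 else phi2) (E t (j-1)) (E t (j+1)) := by
      intro j h0 h10
      rw [hE]
      rw [show blockEvolve 9 (fun j => if j = 3 ∨ j = 5 ∨ j = 9 then phi3 else phi2)
        (fun j => decide (j = 3) || decide (j = 4) || decide (j = 9)) u v (t+1) j =
        if j = 0 then u (t+1) else if j = 9 + 1 then v (t+1)
        else (if j = 3 ∨ j = 5 ∨ j = 9 then phi3 else phi2)
          (blockEvolve 9 (fun j => if j = 3 ∨ j = 5 ∨ j = 9 then phi3 else phi2)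
            (fun j => decide (j = 3) || decide (j = 4) || decide (j = 9)) u v t (j-1))
          (blockEvolve 9 (fun j => if j = 3 ∨ j = 5 ∨ j = 9 then phi3 else phi2)
            (fun j => decide (j = 3) || decide (j = 4) || decide (j = 9)) u v t (j+1))
        from rfl]
      simp [h0, show j ≠ 9 + 1 by omega]
    have hr : t % 4 = 0 ∨ t % 4 = 1 ∨ t % 4 = 2 ∨ t % 4 = 3 := by omega
    rcases hr with hr | hr | hr | hr <;>
    · have hr' : (t+1) % 4 = (t % 4 + 1) % 4 := by omega
      rw [hr] at hr'
      norm_num at hr'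
      simp only [hr] at e2 e3 e4 e5 e6 e7 e8 e9
      first
      | have e1 : E t 1 = false := ih1 (by omega)
      | have e1 : (0:ℕ) = 0 := rfl
      clear ih1 ih2 hE
      refine ⟨?_, ?_⟩
      · intro h
        first
        | (exfalso; omega)
        | (rw [step 1 (by norm_num) (by norm_num), if_neg (by decide)]
           norm_num [phi2, tab, e2])
      · intro j h2 h9
        interval_cases j <;>
          rw [step _ (by norm_num) (by norm_num)] <;>
          first
          | (rw [if_pos (by decide)]; norm_num [phi3, tab, hr', e1, e2, e3, e4, e5, e6, e7, e8, e9])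
          | (rw [if_neg (by decide)]; norm_num [phi2, tab, hr', e1, e2, e3, e4, e5, e6, e7, e8, e9])

/-- the rule block `(φ2, φ2, φ3, φ2, φ3, φ2, φ2, φ2, φ3)` with value
block `b = (0,0,1,1,0,0,0,0,1)` is an absorbing block with a stable central cell:
for all boundary sequences `u, v` and all `t ≥ 0`, `y_6(t) = 0`. -/
theorem stmt15 (u v : ℕ → Bool) (t : ℕ) :
    blockEvolve 9 (fun j => if j = 3 ∨ j = 5 ∨ j = 9 then phi3 else phi2)
      (fun j => decide (j = 3) || decide (j = 4) || decide (j = 9)) u v t 6 = false := by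
  have h := (stmt15_key u v t).2 6 (by norm_num) (by norm_num)
  rw [h]
  have : t % 4 = 0 ∨ t % 4 = 1 ∨ t % 4 = 2 ∨ t % 4 = 3 := by omega
  rcases this with h | h | h | h <;> simp [tab, h]
end
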